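/- arXiv:math-ph/9907014 — 3 statements merged into one kernel-verified Lean document; each statement's English description precedes it below -/
import Mathlib

section
/- Conversely, let n divide N with N = k·n, let b be a string of length n over {0, …, A−1} whose orbit under the cyclic shift of length-n strings has size exactly n, and let a be the string of length N obtained by concatenating k copies of b (a_i = b_{i mod n}). Then the orbit of a under the cyclic shift of length-N strings has size exactly n, and Σ(a) = k·Σ(b). -/
/-- The cyclic shift operator: `(shift a) i = a (i - 1 mod N)`. -/
def shift {A N : ℕ} (a : Fin N → Fin A) : Fin N → Fin A :=
  fun i => a ⟨((i : ℕ) + (N - 1)) % N, Nat.mod_lt _ i.pos⟩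

/-- The orbit of a string under iterated cyclic shifts. -/
def orbit {A N : ℕ} (a : Fin N → Fin A) : Set (Fin N → Fin A) :=
  {b | ∃ k : ℕ, shift^[k] a = b}

/-- The order of the cycle generated by `a`: the size of its shift orbit. -/
noncomputable def orbitSize {A N : ℕ} (a : Fin N → Fin A) : ℕ :=
  (orbit a).ncard

/-- The sum of the entries of a string. -/
def strSum {A N : ℕ} (a : Fin N → Fin A) : ℕ := ∑ i, (a i : ℕ)

/-- `|S(A,N,M)|`: the number of strings of length `N` over `{0,…,A-1}` with sum `M`. -/
noncomputable def Scard (A N M : ℕ) : ℕ :=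
  Set.ncard {a : Fin N → Fin A | strSum a = M}

/-- `M(A,N,M,n)`: the number of strings of length `N` over `{0,…,A-1}` with sum `M`
whose orbit has size exactly `n`. -/
noncomputable def Mcount (A N M n : ℕ) : ℕ :=
  Set.ncard {a : Fin N → Fin A | strSum a = M ∧ orbitSize a = n}

/-- `N(A,N,M,n)`: the number of cycles (shift orbits) of size exactly `n` among strings
of length `N` over `{0,…,A-1}` with sum `M`. -/
noncomputable def Ncount (A N M n : ℕ) : ℕ :=
  Set.ncard {o : Set (Fin N → Fin A) | ∃ a, strSum a = M ∧ orbitSize a = n ∧ o = orbit a}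

/-!
Since `n ∣ N`, shifting commutes with repeating: `shift^[m] a` repeats `shift^[m] b`. A repetition
determines the repeated string and vice versa, so `shift^[m] a = a` iff `shift^[m] b = b`, and `a`,
`b` have the same minimal period under the shift. As the shift is a permutation of a finite set, that
minimal period is the orbit size. The sum is read off the decomposition `Fin N ≃ Fin k × Fin n`.
-/

open Function

lemma shift_injective {A N : ℕ} : Injective (shift : (Fin N → Fin A) → Fin N → Fin A) := by
  intro c c' h
  funext i
  have hi := congrFun h ⟨((i : ℕ) + 1) % N, Nat.mod_lt _ i.pos⟩
  have hσ : (((i : ℕ) + 1) % N + (N - 1)) % N = i := by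
    rw [Nat.mod_add_mod, show (i : ℕ) + 1 + (N - 1) = i + N by omega, Nat.add_mod_right,
      Nat.mod_eq_of_lt i.isLt]
  simpa only [shift, hσ] using hi

lemma orbit_eq_image_Iio_minimalPeriod {A N : ℕ} (c : Fin N → Fin A) :
    orbit c = (shift^[·] c) '' Set.Iio (minimalPeriod shift c) := by
  have hpos := minimalPeriod_pos_of_mem_periodicPts (shift_injective.mem_periodicPts c)
  ext d
  constructor
  · rintro ⟨m, rfl⟩
    exact ⟨m % minimalPeriod shift c, Nat.mod_lt _ hpos, iterate_mod_minimalPeriod_eq⟩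
  · rintro ⟨m, -, rfl⟩
    exact ⟨m, rfl⟩

lemma orbitSize_eq_minimalPeriod {A N : ℕ} (c : Fin N → Fin A) :
    orbitSize c = minimalPeriod shift c := by
  rw [orbitSize, orbit_eq_image_Iio_minimalPeriod, iterate_injOn_Iio_minimalPeriod.ncard_image]
  simp

def IsRepeatOf {A N n : ℕ} (a : Fin N → Fin A) (b : Fin n → Fin A) : Prop :=
  ∀ (i : Fin N) (j : Fin n), (i : ℕ) % n = j → a i = b j

namespace IsRepeatOf

variable {A N n : ℕ} {a a' : Fin N → Fin A} {b b' : Fin n → Fin A}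

lemma shift (h : IsRepeatOf a b) (hnN : n ∣ N) : IsRepeatOf (shift a) (shift b) := by
  intro i j hij
  apply h
  have hle := Nat.le_of_dvd i.pos hnN
  have hmod : n - 1 ≡ N - 1 [MOD n] := by
    rw [Nat.modEq_iff_dvd' (by omega), show N - 1 - (n - 1) = N - n by omega]
    exact Nat.dvd_sub hnN dvd_rfl
  show ((i + (N - 1)) % N) % n = (j + (n - 1)) % n
  rw [Nat.mod_mod_of_dvd _ hnN, ← hij, Nat.mod_add_mod]
  exact (hmod.add_left _).symm

lemma iterate_shift (h : IsRepeatOf a b) (hnN : n ∣ N) (m : ℕ) :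
    IsRepeatOf (_root_.shift^[m] a) (_root_.shift^[m] b) := by
  induction m with
  | zero => exact h
  | succ m ih =>
    rw [iterate_succ_apply', iterate_succ_apply']
    exact ih.shift hnN

lemma eq_iff (h : IsRepeatOf a b) (h' : IsRepeatOf a' b') (hnN : n ∣ N) (hN : 0 < N) :
    a = a' ↔ b = b' := by
  constructor
  · rintro rfl
    funext j
    have hj : (j : ℕ) < N := j.isLt.trans_le (Nat.le_of_dvd hN hnN)
    rw [← h ⟨j, hj⟩ j (Nat.mod_eq_of_lt j.isLt), ← h' ⟨j, hj⟩ j (Nat.mod_eq_of_lt j.isLt)]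
  · rintro rfl
    funext i
    have hn : 0 < n := Nat.pos_of_dvd_of_pos hnN hN
    rw [h i ⟨i % n, Nat.mod_lt _ hn⟩ rfl, h' i ⟨i % n, Nat.mod_lt _ hn⟩ rfl]

lemma minimalPeriod_shift_eq (h : IsRepeatOf a b) (hnN : n ∣ N) (hN : 0 < N) :
    minimalPeriod _root_.shift a = minimalPeriod _root_.shift b :=
  minimalPeriod_eq_minimalPeriod_iff.2 fun m => (h.iterate_shift hnN m).eq_iff h hnN hN

lemma strSum_eq {k : ℕ} (h : IsRepeatOf a b) (hk : N = k * n) : strSum a = k * strSum b := by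
  let e : Fin k × Fin n ≃ Fin N := finProdFinEquiv.trans (finCongr hk.symm)
  have hae : ∀ p, a (e p) = b p.2 := fun p => h _ _ <| by
    show ((p.2 : ℕ) + n * p.1) % n = p.2
    rw [Nat.add_mul_mod_self_left, Nat.mod_eq_of_lt p.2.isLt]
  rw [strSum, ← e.sum_comp]
  simp [hae, Fintype.sum_prod_type, strSum]

end IsRepeatOf

/-- Conversely: if `n` divides `N = k·n ≥ 1`, `b` is a string of length `n` with orbit of
size exactly `n`, and `a` is the length-`N` concatenation of `k` copies of `b`
(`a_i = b_{i mod n}`), then the orbit of `a` has size exactly `n` and `Σ(a) = k·Σ(b)`. -/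
theorem stmt_5 (A N n k : ℕ) (hN : 1 ≤ N) (hk : N = k * n)
    (b : Fin n → Fin A) (hb : orbitSize b = n)
    (a : Fin N → Fin A)
    (ha : ∀ (i : Fin N) (j : Fin n), (i : ℕ) % n = (j : ℕ) → a i = b j) :
    orbitSize a = n ∧ strSum a = k * strSum b := by
  have hab : IsRepeatOf a b := ha
  have hnN : n ∣ N := Dvd.intro_left k hk.symm
  refine ⟨?_, hab.strSum_eq hk⟩
  rw [orbitSize_eq_minimalPeriod, hab.minimalPeriod_shift_eq hnN hN,
    ← orbitSize_eq_minimalPeriod, hb]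
end

section
/- If in the prime factorization of the natural number K ≥ 1 at least one prime occurs with multiplicity two or more (i.e. K is not squarefree), then Δ_K = 0, where Δ_K is the number of even-length ordered factorizations of K into factors ≥ 2 minus the number of odd-length such factorizations. -/
/-- `L` is an ordered factorization of `K` into factors `≥ 2`. -/
def IsOrderedFactorization (K : ℕ) (L : List ℕ) : Prop :=
  (∀ x ∈ L, 2 ≤ x) ∧ L.prod = K

/-- `Δ_K`: the number of even-length ordered factorizations of `K` into factors `≥ 2`
minus the number of odd-length such factorizations. -/
noncomputable def Delta (K : ℕ) : ℤ :=
  (Set.ncard {L : List ℕ | IsOrderedFactorization K L ∧ Even L.length} : ℤ) -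
  (Set.ncard {L : List ℕ | IsOrderedFactorization K L ∧ Odd L.length} : ℤ)

/-!
Splitting off the first factor `d ≠ 1` of an ordered factorization of `K ≠ 1` leaves an ordered
factorization of `K / d` and flips the sign, so `Δ_K = -∑_{d ∣ K, d ≠ 1} Δ_{K/d}`, while
`Δ_1 = 1`. As arithmetic functions this says `ζ * Δ = 1`, hence `Δ = μ * ζ * Δ = μ`, and `μ`
vanishes off the squarefree numbers.
-/

open ArithmeticFunction Finset
open scoped ArithmeticFunction.Moebius ArithmeticFunction.zeta

@[simp]
lemma isOrderedFactorization_nil {K : ℕ} : IsOrderedFactorization K [] ↔ K = 1 := by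
  simp [IsOrderedFactorization, eq_comm]

lemma isOrderedFactorization_cons {K a : ℕ} {L : List ℕ} :
    IsOrderedFactorization K (a :: L) ↔
      a ∈ K.divisors.erase 1 ∧ IsOrderedFactorization (K / a) L := by
  simp only [IsOrderedFactorization, List.forall_mem_cons, List.prod_cons, mem_erase,
    Nat.mem_divisors]
  constructor
  · rintro ⟨⟨ha, hL⟩, rfl⟩
    have hprod : 0 < L.prod := List.prod_pos fun x hx => by linarith [hL x hx]
    refine ⟨⟨by omega, dvd_mul_right a _, by positivity⟩, hL, ?_⟩
    rw [Nat.mul_div_cancel_left _ (by omega)]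
  · rintro ⟨⟨ha, haK, hK⟩, hL, hprod⟩
    have : a ≠ 0 := ne_zero_of_dvd_ne_zero hK haK
    exact ⟨⟨by omega, hL⟩, by rw [hprod, Nat.mul_div_cancel' haK]⟩

lemma div_lt_self_of_mem_divisors_erase_one {K d : ℕ} (hd : d ∈ K.divisors.erase 1) :
    K / d < K := by
  obtain ⟨hd1, hdK, hK⟩ := by simpa only [mem_erase, Nat.mem_divisors] using hd
  have : d ≠ 0 := ne_zero_of_dvd_ne_zero hK hdK
  exact Nat.div_lt_self (Nat.pos_of_ne_zero hK) (by omega)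

lemma finite_setOf_isOrderedFactorization (K : ℕ) :
    {L | IsOrderedFactorization K L}.Finite := by
  induction K using Nat.strong_induction_on with
  | _ K ih =>
    refine ((Set.finite_singleton []).union ((K.divisors.erase 1).finite_toSet.biUnion
      fun d hd => (ih _ (div_lt_self_of_mem_divisors_erase_one hd)).image (d :: ·))).subset ?_
    rintro (_ | ⟨a, L⟩) hL
    · exact Or.inl rfl
    · rw [Set.mem_ofPred_eq, isOrderedFactorization_cons] at hL
      exact Or.inr (Set.mem_biUnion hL.1 ⟨L, hL.2, rfl⟩)

noncomputable def orderedFactorizations (K : ℕ) : Finset (List ℕ) :=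
  (finite_setOf_isOrderedFactorization K).toFinset

@[simp]
lemma mem_orderedFactorizations {K : ℕ} {L : List ℕ} :
    L ∈ orderedFactorizations K ↔ IsOrderedFactorization K L :=
  Set.Finite.mem_toFinset _

lemma orderedFactorizations_zero : orderedFactorizations 0 = ∅ := by
  ext (_ | ⟨a, L⟩) <;> simp [isOrderedFactorization_cons]

lemma orderedFactorizations_one : orderedFactorizations 1 = {[]} := by
  ext (_ | ⟨a, L⟩) <;> simp [isOrderedFactorization_cons]

lemma orderedFactorizations_of_ne_one {K : ℕ} (hK : K ≠ 1) :
    orderedFactorizations K = (K.divisors.erase 1).biUnion fun d =>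
      (orderedFactorizations (K / d)).map ⟨(d :: ·), List.cons_injective⟩ := by
  ext (_ | ⟨a, L⟩) <;> simp [isOrderedFactorization_cons, hK]

noncomputable def signedCount : ArithmeticFunction ℤ where
  toFun K := ∑ L ∈ orderedFactorizations K, (-1) ^ L.length
  map_zero' := by simp [orderedFactorizations_zero]

lemma signedCount_apply (K : ℕ) :
    signedCount K = ∑ L ∈ orderedFactorizations K, (-1) ^ L.length :=
  rfl

lemma signedCount_of_ne_one {K : ℕ} (hK : K ≠ 1) :
    signedCount K = -∑ d ∈ K.divisors.erase 1, signedCount (K / d) := by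
  have hdisj : (K.divisors.erase 1 : Set ℕ).PairwiseDisjoint fun d =>
      (orderedFactorizations (K / d)).map ⟨(d :: ·), List.cons_injective⟩ := by
    intro a _ b _ hab
    simp only [Function.onFun, disjoint_left, mem_map, Function.Embedding.coeFn_mk]
    rintro _ ⟨L, -, rfl⟩ ⟨M, -, hM⟩
    exact hab (List.cons_eq_cons.mp hM).1.symm
  simp [signedCount_apply, orderedFactorizations_of_ne_one hK, sum_biUnion hdisj, pow_succ]

lemma coe_zeta_mul_signedCount : (ζ : ArithmeticFunction ℤ) * signedCount = 1 := by
  ext K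
  rw [coe_zeta_mul_apply, one_apply, ← Nat.sum_div_divisors]
  rcases eq_or_ne K 1 with rfl | hK1
  · simp [signedCount_apply, orderedFactorizations_one]
  rcases eq_or_ne K 0 with rfl | hK0
  · simp
  rw [← add_sum_erase _ _ (Nat.one_mem_divisors.mpr hK0), Nat.div_one,
    signedCount_of_ne_one hK1, if_neg hK1, neg_add_cancel]

lemma signedCount_eq_moebius : signedCount = μ := by
  calc signedCount = μ * ζ * signedCount := by rw [moebius_mul_coe_zeta, one_mul]
    _ = μ := by rw [mul_assoc, coe_zeta_mul_signedCount, mul_one]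

lemma delta_eq_signedCount (K : ℕ) : Delta K = signedCount K := by
  have hfilter (p : ℕ → Prop) [DecidablePred p] :
      {L | IsOrderedFactorization K L ∧ p L.length} =
        ↑((orderedFactorizations K).filter fun L => p L.length) := by
    ext L
    simp
  simp_rw [Delta, hfilter, Set.ncard_coe_finset, ← Nat.not_even_iff_odd, signedCount_apply,
    neg_one_pow_eq_ite, sum_ite, sum_const, smul_neg, nsmul_one, sub_eq_add_neg]

theorem delta_eq_moebius (K : ℕ) : Delta K = μ K := by
  rw [delta_eq_signedCount, signedCount_eq_moebius]

theorem stmt_9_general (K : ℕ) (h : ∃ p : ℕ, p.Prime ∧ p ^ 2 ∣ K) :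
    Delta K = 0 := by
  obtain ⟨p, hp, hpK⟩ := h
  have hK : ¬Squarefree K := fun hsq =>
    Nat.squarefree_iff_prime_squarefree.mp hsq p hp (by rwa [← sq])
  rw [delta_eq_moebius, moebius_eq_zero_of_not_squarefree hK]

/-- If in the prime factorization of `K ≥ 1` some prime occurs with multiplicity at least
two (i.e. `K` is not squarefree), then `Δ_K = 0`. -/
theorem stmt_9 (K : ℕ) (hK : 1 ≤ K) (h : ∃ p : ℕ, p.Prime ∧ p ^ 2 ∣ K) :
    Delta K = 0 :=
  stmt_9_general K h
end

section
/- For natural numbers A ≥ 1 and n ≥ 1, the number of cyclic-shift orbits (cycles) of size exactly n among strings of length n over the alphabet {0, …, A−1} equals (1/n) · ∑_{k | n} μ(n/k) · A^k, where μ is the Möbius function. -/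
/-- The number of cycles (shift orbits) of size exactly `n` among strings of length `n`
over `{0,…,A-1}`. -/
noncomputable def NcountTotal (A n : ℕ) : ℕ :=
  Set.ncard {o : Set (Fin n → Fin A) | ∃ a, orbitSize a = n ∧ o = orbit a}

open Function Finset

open scoped ArithmeticFunction.Moebius

section Orbits

variable {α : Type*} {f : α → α} {x y : α}

theorem range_iterate_eq_image_Iio_minimalPeriod (hx : x ∈ periodicPts f) :
    Set.range (f^[·] x) = (f^[·] x) '' Set.Iio (minimalPeriod f x) := by
  ext y
  constructor
  · rintro ⟨k, rfl⟩
    exact ⟨k % minimalPeriod f x, Nat.mod_lt _ (minimalPeriod_pos_of_mem_periodicPts hx),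
      iterate_mod_minimalPeriod_eq⟩
  · rintro ⟨k, -, rfl⟩
    exact ⟨k, rfl⟩

theorem ncard_range_iterate (hx : x ∈ periodicPts f) :
    (Set.range (f^[·] x)).ncard = minimalPeriod f x := by
  rw [range_iterate_eq_image_Iio_minimalPeriod hx,
    iterate_injOn_Iio_minimalPeriod.ncard_image, ← coe_Iio, Set.ncard_coe_finset,
    Nat.card_Iio]

theorem range_iterate_subset_of_mem (hy : y ∈ Set.range (f^[·] x)) :
    Set.range (f^[·] y) ⊆ Set.range (f^[·] x) := by
  obtain ⟨k, rfl⟩ := hy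
  rintro _ ⟨l, rfl⟩
  exact ⟨l + k, iterate_add_apply f l k x⟩

theorem mem_range_iterate_of_mem (hx : x ∈ periodicPts f) (hy : y ∈ Set.range (f^[·] x)) :
    x ∈ Set.range (f^[·] y) := by
  obtain ⟨k, rfl⟩ := hy
  obtain ⟨p, hp, hpx⟩ := hx
  refine ⟨(p - 1) * k, ?_⟩
  have hpk : (p - 1) * k + k = p * k := by
    rw [Nat.sub_one_mul, Nat.sub_add_cancel (Nat.le_mul_of_pos_left k hp)]
  show f^[(p - 1) * k] (f^[k] x) = x
  rw [← iterate_add_apply, hpk]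
  exact hpx.mul_const k

theorem range_iterate_eq_iff (hx : x ∈ periodicPts f) :
    Set.range (f^[·] y) = Set.range (f^[·] x) ↔ y ∈ Set.range (f^[·] x) :=
  ⟨fun h => h ▸ ⟨0, rfl⟩, fun hy => (range_iterate_subset_of_mem hy).antisymm
    (range_iterate_subset_of_mem (mem_range_iterate_of_mem hx hy))⟩

theorem card_filter_ncard_range_iterate [Fintype α] (hf : ∀ x, x ∈ periodicPts f) (m : ℕ) :
    #{x | (Set.range (f^[·] x)).ncard = m} =
      m * {o : Set α | ∃ x, (Set.range (f^[·] x)).ncard = m ∧ o = Set.range (f^[·] x)}.ncard := by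
  classical
  set X : Finset α := {x | (Set.range (f^[·] x)).ncard = m}
  have horbits : {o : Set α | ∃ x, (Set.range (f^[·] x)).ncard = m ∧ o = Set.range (f^[·] x)} =
      ↑(X.image fun x => Set.range (f^[·] x)) := by
    ext o
    simp [X, eq_comm]
  have hfiber : ∀ x ∈ X, #{y ∈ X | Set.range (f^[·] y) = Set.range (f^[·] x)} = m := by
    intro x hx
    have : ↑({y ∈ X | Set.range (f^[·] y) = Set.range (f^[·] x)} : Finset α) =
        Set.range (f^[·] x) := by
      ext y
      simp only [coe_filter, Set.mem_ofPred_eq, range_iterate_eq_iff (hf x)]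
      refine ⟨And.right, fun hy => ⟨?_, hy⟩⟩
      simpa [X, (range_iterate_eq_iff (hf x)).mpr hy] using hx
    rw [← Set.ncard_coe_finset, this]
    simpa [X] using hx
  rw [horbits, Set.ncard_coe_finset,
    card_eq_sum_card_fiberwise (t := X.image fun x => Set.range (f^[·] x))
      fun x hx => mem_image_of_mem _ hx, sum_const_nat, mul_comm]
  intro o ho
  obtain ⟨x, hx, rfl⟩ := mem_image.mp ho
  exact hfiber x hx

end Orbits

section Moebius

variable {α : Type*} [Fintype α] [DecidableEq α] {f : α → α}

theorem card_isPeriodicPt_eq_sum_card_minimalPeriod {d : ℕ} (hd : 0 < d) :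
    #{x | IsPeriodicPt f d x} = ∑ e ∈ d.divisors, #{x | minimalPeriod f x = e} := by
  rw [card_eq_sum_card_fiberwise (f := minimalPeriod f) (t := d.divisors) fun x hx =>
    Nat.mem_divisors.mpr ⟨isPeriodicPt_iff_minimalPeriod_dvd.mp (mem_filter.mp hx).2, hd.ne'⟩]
  refine sum_congr rfl fun e he => ?_
  rw [filter_filter]
  refine congrArg card (filter_congr fun x _ => ⟨And.right, fun hx => ⟨?_, hx⟩⟩)
  exact isPeriodicPt_iff_minimalPeriod_dvd.mpr (hx ▸ Nat.dvd_of_mem_divisors he)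

theorem card_minimalPeriod_eq_sum_moebius {R : Type*} [NonAssocRing R] {n : ℕ} (hn : 0 < n)
    (g : ℕ → R) (hg : ∀ d, d ∣ n → 0 < d → (#{x | IsPeriodicPt f d x} : R) = g d) :
    (#{x | minimalPeriod f x = n} : R) = ∑ k ∈ n.divisors, (μ (n / k) : R) * g k := by
  have hsum : ∀ d > 0, d ∈ {d | d ∣ n} →
      ∑ e ∈ d.divisors, (#{x | minimalPeriod f x = e} : R) = g d := by
    intro d hd hdn
    rw [← hg d hdn hd, card_isPeriodicPt_eq_sum_card_minimalPeriod hd, Nat.cast_sum]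
  rw [← (ArithmeticFunction.sum_eq_iff_sum_mul_moebius_eq_on _
    (fun _ _ => Nat.dvd_trans)).mp hsum n hn dvd_rfl, Nat.sum_divisorsAntidiagonal'
    (f := fun k l => (μ k : R) * g l)]

end Moebius

section Shift

variable {A n : ℕ}

theorem shift_iterate_apply [NeZero n] (a : Fin n → Fin A) (k : ℕ) (i : Fin n) :
    shift^[k] a i = a (Fin.ofNat n (i + k * (n - 1))) := by
  induction k generalizing i with
  | zero => simp
  | succ k ih =>
    rw [iterate_succ_apply', shift, ih]
    congr 1
    ext
    simp only [Fin.val_ofNat, Nat.mod_add_mod]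
    ring_nf

theorem isPeriodicPt_shift_length [NeZero n] (a : Fin n → Fin A) : IsPeriodicPt shift n a := by
  funext i
  rw [shift_iterate_apply]
  congr 1
  ext
  simp [Nat.mod_eq_of_lt i.2]

theorem isPeriodicPt_shift_iff [NeZero n] {d : ℕ} [NeZero d] (hd : d ∣ n) (a : Fin n → Fin A) :
    IsPeriodicPt shift d a ↔ ∃ b : Fin d → Fin A, b ∘ Fin.ofNat d ∘ Fin.val = a := by
  have hdn : d ≤ n := Nat.le_of_dvd (Nat.pos_of_neZero n) hd
  constructor
  · intro ha
    refine ⟨fun j => a (Fin.castLE hdn j), funext fun i => ?_⟩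
    -- `d * (i / d)` is a period of `a`, and shifting by it moves position `i` to `i % d`.
    calc a (Fin.castLE hdn (Fin.ofNat d i)) = shift^[d * (i / d)] a i := by
          rw [shift_iterate_apply]
          congr 1
          ext
          have : (i : ℕ) + d * (i / d) * (n - 1) = i % d + n * (d * (i / d)) := by
            have hi := Nat.mod_add_div i d
            generalize (i : ℕ) = j at hi ⊢
            obtain ⟨m, hm⟩ := Nat.exists_eq_add_one_of_ne_zero (NeZero.ne n)
            rw [hm, Nat.add_sub_cancel]
            linarith
          simp [this, Nat.add_mul_mod_self_left,
            Nat.mod_eq_of_lt ((Nat.mod_lt _ (Nat.pos_of_neZero d)).trans_le hdn)]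
      _ = a i := congrFun (ha.mul_const _) i
  · rintro ⟨b, rfl⟩
    funext i
    simp only [comp_apply, shift_iterate_apply]
    congr 1
    ext
    simp [Nat.mod_mod_of_dvd _ hd, Nat.add_mul_mod_self_left]

theorem card_isPeriodicPt_shift [NeZero n] {d : ℕ} [NeZero d] (hd : d ∣ n) :
    #{a : Fin n → Fin A | IsPeriodicPt shift d a} = A ^ d := by
  have hdn : d ≤ n := Nat.le_of_dvd (Nat.pos_of_neZero n) hd
  have hsurj : Surjective (Fin.ofNat d ∘ Fin.val : Fin n → Fin d) :=
    fun j => ⟨Fin.castLE hdn j, by ext; simp⟩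
  have hperiodic : ({a | IsPeriodicPt shift d a} : Finset (Fin n → Fin A)) =
      univ.image fun b : Fin d → Fin A => b ∘ Fin.ofNat d ∘ Fin.val := by
    ext a
    simp [isPeriodicPt_shift_iff hd]
  rw [hperiodic, card_image_of_injective _ hsurj.injective_comp_right, card_univ,
    Fintype.card_fun, Fintype.card_fin, Fintype.card_fin]

end Shift

theorem stmt_14_general (A n : ℕ) (hn : 1 ≤ n) :
    (NcountTotal A n : ℚ) =
      (1 / (n : ℚ)) *
        ∑ k ∈ n.divisors, (ArithmeticFunction.moebius (n / k) : ℚ) * (A : ℚ) ^ k := by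
  have : NeZero n := ⟨Nat.one_le_iff_ne_zero.mp hn⟩
  have hperiodic (a : Fin n → Fin A) : a ∈ periodicPts shift :=
    mk_mem_periodicPts hn (isPeriodicPt_shift_length a)
  have hmoebius : (#{a : Fin n → Fin A | minimalPeriod shift a = n} : ℚ) =
      ∑ k ∈ n.divisors, (μ (n / k) : ℚ) * (A : ℚ) ^ k :=
    card_minimalPeriod_eq_sum_moebius hn _ fun d hd hd0 => by
      have : NeZero d := ⟨hd0.ne'⟩
      exact_mod_cast card_isPeriodicPt_shift hd
  have horbits : #{a : Fin n → Fin A | minimalPeriod shift a = n} = n * NcountTotal A n := by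
    simp_rw [← ncard_range_iterate (hperiodic _)]
    exact card_filter_ncard_range_iterate hperiodic n
  rw [← hmoebius, horbits]
  push_cast
  field_simp

/-- The number of cycles of size exactly `n` among strings of length `n ≥ 1` over
`{0,…,A-1}` (`A ≥ 1`) equals `(1/n)·∑_{k ∣ n} μ(n/k)·A^k`. -/
theorem stmt_14 (A n : ℕ) (hA : 1 ≤ A) (hn : 1 ≤ n) :
    (NcountTotal A n : ℚ) =
      (1 / (n : ℚ)) *
        ∑ k ∈ n.divisors, (ArithmeticFunction.moebius (n / k) : ℚ) * (A : ℚ) ^ k :=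
  stmt_14_general A n hn
end
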